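/- Let P, Q be nonzero coprime polynomials over a finite field F_q with deg P > deg Q, and let D = {s ∈ F_q[X] : deg s < deg P}. Then every polynomial w ∈ F_q[X] admits a unique finite expansion w = Σ_{i=0}^{k} (s_i/Q)·(P/Q)^i with all s_i ∈ D (uniqueness meaning: two such expansions, after padding with zero digits, have equal digits). -/

import Mathlib

/-!
Existence: Euclidean division `w Q = P w' + s` with `deg s < deg P` gives
`w = s/Q + (P/Q) w'`, and `deg w' < deg w` because `deg Q < deg P`; recurse on `w'`.
Uniqueness: if `∑_{i < n} (d_i/Q)(P/Q)^i = 0`, clearing denominators gives `P ∣ d_0 Q^(n-1)`,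
so `P ∣ d_0` by coprimality and `d_0 = 0` by degree; then the tail vanishes as well.
-/

open Polynomial Finset

section PQExpansion

variable {K : Type*} [Field K]

noncomputable def pqExpansion (P Q : K[X]) (s : ℕ → K[X]) (n : ℕ) : RatFunc K :=
  ∑ i ∈ range n, (algebraMap K[X] (RatFunc K) (s i) / algebraMap K[X] (RatFunc K) Q) *
    (algebraMap K[X] (RatFunc K) P / algebraMap K[X] (RatFunc K) Q) ^ i

variable {P Q : K[X]}

theorem pqExpansion_succ (s : ℕ → K[X]) (n : ℕ) :
    pqExpansion P Q s (n + 1) =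
      algebraMap K[X] (RatFunc K) (s 0) / algebraMap K[X] (RatFunc K) Q +
        algebraMap K[X] (RatFunc K) P / algebraMap K[X] (RatFunc K) Q *
          pqExpansion P Q (fun i ↦ s (i + 1)) n := by
  rw [pqExpansion, sum_range_succ', pqExpansion, mul_sum, add_comm]
  simp only [pow_zero, mul_one, pow_succ]
  congr 1
  exact sum_congr rfl fun i _ ↦ by ring

theorem pqExpansion_sub (s t : ℕ → K[X]) (n : ℕ) :
    pqExpansion P Q (s - t) n = pqExpansion P Q s n - pqExpansion P Q t n := by
  simp only [pqExpansion, ← sum_sub_distrib, Pi.sub_apply, map_sub, sub_div, sub_mul]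

theorem pqExpansion_eq_of_le {s : ℕ → K[X]} {n m : ℕ} (hs : ∀ i ≥ n, s i = 0)
    (hnm : n ≤ m) :
    pqExpansion P Q s m = pqExpansion P Q s n :=
  eventually_constant_sum (fun i hi ↦ by simp [hs i hi]) hnm

theorem exists_algebraMap_eq_pow_mul_pqExpansion (hQ : Q ≠ 0) (s : ℕ → K[X]) (n : ℕ) :
    ∃ a : K[X], algebraMap K[X] (RatFunc K) a =
      algebraMap K[X] (RatFunc K) Q ^ n * pqExpansion P Q s n := by
  induction n generalizing s with
  | zero => exact ⟨0, by simp [pqExpansion]⟩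
  | succ n ih =>
    obtain ⟨a, ha⟩ := ih fun i ↦ s (i + 1)
    refine ⟨s 0 * Q ^ n + P * a, ?_⟩
    have := RatFunc.algebraMap_ne_zero hQ
    rw [pqExpansion_succ, map_add, map_mul, map_mul, map_pow, ha]
    field_simp
    ring

theorem degree_mul_div_lt {w : K[X]} (hw : w ≠ 0) (hdeg : Q.degree < P.degree) :
    (w * Q / P).degree < w.degree := by
  have hP : P ≠ 0 := ne_zero_of_degree_gt hdeg
  by_cases h : P.degree ≤ (w * Q).degree
  · by_contra! h_le
    have h_add := degree_add_div hP h
    rw [degree_mul] at h_add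
    refine lt_irrefl (w.degree + Q.degree) ?_
    calc w.degree + Q.degree < w.degree + P.degree :=
          WithBot.add_lt_add_left (degree_ne_bot.2 hw) hdeg
      _ = P.degree + w.degree := add_comm _ _
      _ ≤ P.degree + (w * Q / P).degree := by gcongr
      _ = w.degree + Q.degree := h_add
  · rw [(Polynomial.div_eq_zero_iff hP).2 (not_le.1 h), degree_zero]
    exact (degree_ne_bot.2 hw).bot_lt

theorem exists_digits_pqExpansion_eq (hQ : Q ≠ 0) (hdeg : Q.degree < P.degree) (w : K[X]) :
    ∃ s : ℕ → K[X], (∀ i, (s i).degree < P.degree) ∧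
      ∃ k : ℕ, (∀ i, k < i → s i = 0) ∧
        algebraMap K[X] (RatFunc K) w = pqExpansion P Q s (k + 1) := by
  have hP : P ≠ 0 := ne_zero_of_degree_gt hdeg
  induction w using degree_lt_wf.induction with
  | _ w ih =>
    by_cases hw : w = 0
    · refine ⟨0, fun _ ↦ ?_, 0, fun _ _ ↦ rfl, by simp [hw, pqExpansion]⟩
      exact (degree_ne_bot.2 hP).bot_lt
    obtain ⟨t, ht_deg, k, ht_zero, ht⟩ := ih (w * Q / P) (degree_mul_div_lt hw hdeg)
    refine ⟨fun | 0 => w * Q % P | i + 1 => t i, ?_, k + 1, ?_, ?_⟩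
    · rintro (_ | i)
      exacts [degree_mod_lt _ hP, ht_deg i]
    · rintro (_ | i) hi
      exacts [by omega, ht_zero i (by omega)]
    · have h_div :=
        congrArg (algebraMap K[X] (RatFunc K)) (EuclideanDomain.mod_add_div (w * Q) P)
      simp only [map_add, map_mul] at h_div
      have := RatFunc.algebraMap_ne_zero hQ
      rw [pqExpansion_succ, ← ht]
      field_simp
      linear_combination -h_div

theorem digits_eq_zero_of_pqExpansion_eq_zero (hP : P ≠ 0) (hQ : Q ≠ 0) (hcop : IsCoprime P Q)
    {d : ℕ → K[X]} (hd : ∀ i, (d i).degree < P.degree) {n : ℕ}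
    (h : pqExpansion P Q d n = 0) : ∀ i < n, d i = 0 := by
  induction n generalizing d with
  | zero => intro i hi; omega
  | succ n ih =>
    rw [pqExpansion_succ] at h
    have hP' := RatFunc.algebraMap_ne_zero hP
    have hQ' := RatFunc.algebraMap_ne_zero hQ
    obtain ⟨a, ha⟩ :=
      exists_algebraMap_eq_pow_mul_pqExpansion (P := P) hQ (fun i ↦ d (i + 1)) n
    have h_clear : d 0 * Q ^ n + P * a = 0 := by
      apply RatFunc.algebraMap_injective K
      rw [map_add, map_mul, map_mul, map_pow, ha, map_zero]
      field_simp at h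
      linear_combination algebraMap K[X] (RatFunc K) Q ^ n * h
    have hd0 : d 0 = 0 := by
      have h_dvd : P ∣ d 0 * Q ^ n := ⟨-a, by linear_combination h_clear⟩
      exact eq_zero_of_dvd_of_degree_lt (hcop.pow_right.dvd_of_dvd_mul_right h_dvd) (hd 0)
    have h_tail : pqExpansion P Q (fun i ↦ d (i + 1)) n = 0 := by
      simpa [hd0, hP', hQ'] using h
    rintro (_ | i) hi
    exacts [hd0, ih (fun i ↦ hd (i + 1)) h_tail i (by omega)]

theorem eq_of_pqExpansion_eq (hP : P ≠ 0) (hQ : Q ≠ 0) (hcop : IsCoprime P Q)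
    {s t : ℕ → K[X]} (hs_deg : ∀ i, (s i).degree < P.degree)
    (ht_deg : ∀ i, (t i).degree < P.degree)
    {k l : ℕ} (hs_zero : ∀ i, k < i → s i = 0) (ht_zero : ∀ i, l < i → t i = 0)
    (h : pqExpansion P Q s (k + 1) = pqExpansion P Q t (l + 1)) : s = t := by
  set N := max k l + 1
  have hs : pqExpansion P Q s N = pqExpansion P Q s (k + 1) :=
    pqExpansion_eq_of_le (fun i hi ↦ hs_zero i (by omega)) (by omega)
  have ht : pqExpansion P Q t N = pqExpansion P Q t (l + 1) :=
    pqExpansion_eq_of_le (fun i hi ↦ ht_zero i (by omega)) (by omega)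
  have h_diff : pqExpansion P Q (s - t) N = 0 := by rw [pqExpansion_sub, hs, ht, h, sub_self]
  have h_eq := digits_eq_zero_of_pqExpansion_eq_zero hP hQ hcop
    (fun i ↦ (degree_sub_le _ _).trans_lt (max_lt (hs_deg i) (ht_deg i))) h_diff
  funext i
  by_cases hi : i < N
  · exact sub_eq_zero.1 (h_eq i hi)
  · rw [hs_zero i (by omega), ht_zero i (by omega)]

end PQExpansion

theorem pq_polynomial_digit_expansion (Fq : Type*) [Field Fq]
    (P Q : Polynomial Fq) (hQ : Q ≠ 0) (hcop : IsCoprime P Q)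
    (hdeg : Q.degree < P.degree) (w : Polynomial Fq) :
    ∃! s : ℕ → Polynomial Fq,
      (∀ i, (s i).degree < P.degree) ∧
      ∃ k : ℕ, (∀ i, k < i → s i = 0) ∧
        algebraMap (Polynomial Fq) (RatFunc Fq) w =
          ∑ i ∈ Finset.range (k + 1),
            (algebraMap (Polynomial Fq) (RatFunc Fq) (s i) /
              algebraMap (Polynomial Fq) (RatFunc Fq) Q) *
            ((algebraMap (Polynomial Fq) (RatFunc Fq) P) /
              (algebraMap (Polynomial Fq) (RatFunc Fq) Q)) ^ i := by
  obtain ⟨s, hs_deg, k, hs_zero, hs⟩ := exists_digits_pqExpansion_eq hQ hdeg w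
  refine ⟨s, ⟨hs_deg, k, hs_zero, hs⟩, ?_⟩
  rintro t ⟨ht_deg, l, ht_zero, ht⟩
  exact eq_of_pqExpansion_eq (ne_zero_of_degree_gt hdeg) hQ hcop ht_deg hs_deg ht_zero hs_zero
    (ht.symm.trans hs)
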